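/- arXiv:1704.02171 — 3 statements merged into one kernel-verified Lean document; each statement's English description precedes it below -/
import Mathlib

section
/- Fix an integer N ≥ 2 and N−1 positive integers k_1,…,k_{N−1}. If k_N and k_N' are two positive integers satisfying max{k_N, k_N'} ≥ max{k_1,…,k_{N−1}}, then |√(k_1²+⋯+k_{N−1}²+k_N²) − √(k_1²+⋯+k_{N−1}²+(k_N')²)| ≥ (√N − √(N−1))·|k_N − k_N'|. -/
lemma aux_sqrt (S a b : ℝ) (n : ℕ) (hn : 2 ≤ n) (hS : 0 ≤ S) (hb : 0 ≤ b)
    (hab : b ≤ a) (ha : 0 < a) (hSa : S ≤ ((n : ℝ) - 1) * a ^ 2) :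
    Real.sqrt (S + a ^ 2) - Real.sqrt (S + b ^ 2) ≥
      (Real.sqrt n - Real.sqrt ((n : ℝ) - 1)) * (a - b) := by
  have hn2 : (2 : ℝ) ≤ (n : ℝ) := by exact_mod_cast hn
  set w := Real.sqrt n with hwdef
  set x := Real.sqrt ((n : ℝ) - 1) with hxdef
  have hw2 : w ^ 2 = (n : ℝ) := Real.sq_sqrt (by linarith)
  have hx2 : x ^ 2 = (n : ℝ) - 1 := Real.sq_sqrt (by linarith)
  have hw0 : 0 ≤ w := Real.sqrt_nonneg _
  have hx0 : 0 ≤ x := Real.sqrt_nonneg _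
  have hw1 : 1 ≤ w := by nlinarith
  have hxw : x ≤ w := by nlinarith
  set u := Real.sqrt (S + a ^ 2) with hudef
  set v := Real.sqrt (S + b ^ 2) with hvdef
  have hu2 : u ^ 2 = S + a ^ 2 := Real.sq_sqrt (by positivity)
  have hv2 : v ^ 2 = S + b ^ 2 := Real.sq_sqrt (by positivity)
  have hu0 : 0 < u := Real.sqrt_pos.2 (by positivity)
  have hv0 : 0 ≤ v := Real.sqrt_nonneg _
  have hua : u ≤ a * w := by
    have h1 : S + a ^ 2 ≤ (a * w) ^ 2 := by nlinarith
    calc u ≤ Real.sqrt ((a * w) ^ 2) := Real.sqrt_le_sqrt h1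
      _ = a * w := Real.sqrt_sq (by positivity)
  have hvb : v ≤ a * x + b := by
    have h1 : S + b ^ 2 ≤ (a * x + b) ^ 2 := by
      nlinarith [mul_nonneg (mul_nonneg ha.le hb) hx0]
    calc v ≤ Real.sqrt ((a * x + b) ^ 2) := Real.sqrt_le_sqrt h1
      _ = a * x + b := Real.sqrt_sq (by positivity)
  have hsum : u + v ≤ (a + b) * (w + x) := by
    nlinarith [mul_nonneg hb (by linarith : (0 : ℝ) ≤ w + x - 1)]
  have hc : 0 ≤ (w - x) * (a - b) := mul_nonneg (by linarith) (by linarith)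
  have hkey : (w - x) * (a - b) * (u + v) ≤ (w - x) * (a - b) * ((a + b) * (w + x)) :=
    mul_le_mul_of_nonneg_left hsum hc
  nlinarith [hkey, hu2, hv2, hw2, hx2]

/-- Fix an integer `N ≥ 2` and `N−1` positive integers `k 0, …, k (N-2)`.
If `kN` and `kN'` are two positive integers satisfying
`max {kN, kN'} ≥ max {k 0, …, k (N-2)}`, then
`|√(k 0² + ⋯ + k (N-2)² + kN²) − √(k 0² + ⋯ + k (N-2)² + kN'²)|
  ≥ (√N − √(N−1)) · |kN − kN'|`. -/
theorem stmt_0 (N : ℕ) (hN : 2 ≤ N) (k : Fin (N - 1) → ℕ) (hk : ∀ i, 0 < k i)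
    (kN kN' : ℕ) (hkN : 0 < kN) (hkN' : 0 < kN')
    (hmax : ∀ i, k i ≤ max kN kN') :
    |Real.sqrt ((∑ i, (k i : ℝ) ^ 2) + (kN : ℝ) ^ 2) -
        Real.sqrt ((∑ i, (k i : ℝ) ^ 2) + (kN' : ℝ) ^ 2)| ≥
      (Real.sqrt N - Real.sqrt ((N : ℝ) - 1)) * |(kN : ℝ) - (kN' : ℝ)| := by
  set S := ∑ i, (k i : ℝ) ^ 2 with hSdef
  have hS0 : 0 ≤ S := Finset.sum_nonneg fun i _ => by positivity
  have hcast : ((N - 1 : ℕ) : ℝ) = (N : ℝ) - 1 := by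
    push_cast [Nat.cast_sub (by omega : 1 ≤ N)]; ring
  have hxw : Real.sqrt ((N : ℝ) - 1) ≤ Real.sqrt N :=
    Real.sqrt_le_sqrt (by linarith)
  have hSbound : ∀ M : ℕ, (∀ i, k i ≤ M) → S ≤ ((N : ℝ) - 1) * (M : ℝ) ^ 2 := by
    intro M hM
    calc S ≤ ∑ _i : Fin (N - 1), (M : ℝ) ^ 2 := by
          apply Finset.sum_le_sum
          intro i _
          have : (k i : ℝ) ≤ (M : ℝ) := by exact_mod_cast hM i
          have hki : (0 : ℝ) ≤ (k i : ℝ) := by positivity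
          nlinarith
      _ = ((N - 1 : ℕ) : ℝ) * (M : ℝ) ^ 2 := by
          rw [Finset.sum_const, Finset.card_univ, Fintype.card_fin, nsmul_eq_mul]
      _ = ((N : ℝ) - 1) * (M : ℝ) ^ 2 := by rw [hcast]
  rcases le_total (kN' : ℝ) (kN : ℝ) with h | h
  · have hmaxeq : max kN kN' = kN := max_eq_left (by exact_mod_cast h)
    have hb : S ≤ ((N : ℝ) - 1) * (kN : ℝ) ^ 2 :=
      hSbound kN fun i => by simpa [hmaxeq] using hmax i
    have key := aux_sqrt S (kN : ℝ) (kN' : ℝ) N hN hS0 (by positivity) h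
      (by exact_mod_cast hkN) hb
    have h1 : (0 : ℝ) ≤ (Real.sqrt N - Real.sqrt ((N : ℝ) - 1)) * ((kN : ℝ) - (kN' : ℝ)) :=
      mul_nonneg (by linarith) (by linarith)
    rw [abs_of_nonneg (by linarith), abs_of_nonneg (by linarith : (0:ℝ) ≤ (kN : ℝ) - (kN' : ℝ))]
    linarith
  · have hmaxeq : max kN kN' = kN' := max_eq_right (by exact_mod_cast h)
    have hb : S ≤ ((N : ℝ) - 1) * (kN' : ℝ) ^ 2 :=
      hSbound kN' fun i => by simpa [hmaxeq] using hmax i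
    have key := aux_sqrt S (kN' : ℝ) (kN : ℝ) N hN hS0 (by positivity) h
      (by exact_mod_cast hkN') hb
    have h1 : (0 : ℝ) ≤ (Real.sqrt N - Real.sqrt ((N : ℝ) - 1)) * ((kN' : ℝ) - (kN : ℝ)) :=
      mul_nonneg (by linarith) (by linarith)
    rw [abs_sub_comm, abs_of_nonneg (by linarith),
      abs_sub_comm, abs_of_nonneg (by linarith : (0:ℝ) ≤ (kN' : ℝ) - (kN : ℝ))]
    linarith
end

section
/- Let β ∈ [0, 2/√3]. Then for all integers k_1 ≥ 1 and k_2, k_2' ≥ 1 with max{k_2, k_2'} ≥ k_1 one has |Re ω_{k_1 k_2} − Re ω_{k_1 k_2'}| ≥ γ(β)·|k_2 − k_2'|, and symmetrically for all integers k_2 ≥ 1 and k_1, k_1' ≥ 1 with max{k_1, k_1'} ≥ k_2 one has |Re ω_{k_1 k_2} − Re ω_{k_1' k_2}| ≥ γ(β)·|k_1 − k_1'|. -/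
open Real

/-- The real (signed) cube root. -/
noncomputable def cbrt (x : ℝ) : ℝ := Real.sign x * |x| ^ ((1 : ℝ) / 3)

/-- `s = √(k₁² + k₂²)`. -/
noncomputable def sNorm (k₁ k₂ : ℕ) : ℝ := Real.sqrt ((k₁ : ℝ) ^ 2 + (k₂ : ℝ) ^ 2)

/-- `Ψ_{k₁k₂}(β) = (3√3/8)·β³/s³`. -/
noncomputable def Psi (β : ℝ) (k₁ k₂ : ℕ) : ℝ :=
  (3 * Real.sqrt 3 / 8) * β ^ 3 / (sNorm k₁ k₂) ^ 3

/-- `Φ_{k₁k₂}(β) = √(1 − (9/4)β²/s² + (27/16)β⁴/s⁴)`. -/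
noncomputable def Phi (β : ℝ) (k₁ k₂ : ℕ) : ℝ :=
  Real.sqrt (1 - (9 / 4) * β ^ 2 / (sNorm k₁ k₂) ^ 2 + (27 / 16) * β ^ 4 / (sNorm k₁ k₂) ^ 4)

/-- `Λ⁺_{k₁k₂}(β) = (1/2)·∛(Φ + Ψ)`. -/
noncomputable def LamP (β : ℝ) (k₁ k₂ : ℕ) : ℝ := (1 / 2) * cbrt (Phi β k₁ k₂ + Psi β k₁ k₂)

/-- `Λ⁻_{k₁k₂}(β) = (1/2)·∛(Φ − Ψ)`. -/
noncomputable def LamM (β : ℝ) (k₁ k₂ : ℕ) : ℝ := (1 / 2) * cbrt (Phi β k₁ k₂ - Psi β k₁ k₂)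

/-- `Re ω_{k₁k₂} = s·(Λ⁺ + Λ⁻)`. -/
noncomputable def ReOmega (β : ℝ) (k₁ k₂ : ℕ) : ℝ := sNorm k₁ k₂ * (LamP β k₁ k₂ + LamM β k₁ k₂)

/-- `Im ω_{k₁k₂} = (1/√3)·s·(Λ⁻ − Λ⁺) + β/2`. -/
noncomputable def ImOmega (β : ℝ) (k₁ k₂ : ℕ) : ℝ :=
  (1 / Real.sqrt 3) * sNorm k₁ k₂ * (LamM β k₁ k₂ - LamP β k₁ k₂) + β / 2

/-- The gap constant `γ(β)`. -/
noncomputable def gam (β : ℝ) : ℝ :=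
  ((Real.sqrt 2 - 1) / 2) *
    (cbrt (Real.sqrt (1 - (9 / 8) * β ^ 2 + (27 / 64) * β ^ 4)
        + (3 * Real.sqrt 3 / (16 * Real.sqrt 2)) * β ^ 3)
      + cbrt (Real.sqrt (1 - (9 / 8) * β ^ 2 + (27 / 64) * β ^ 4)
        - (3 * Real.sqrt 3 / (16 * Real.sqrt 2)) * β ^ 3))


lemma cube_inj {a b : ℝ} (h : a ^ 3 = b ^ 3) : a = b := by
  have := Odd.strictMono_pow (R := ℝ) (n := 3) (by decide)
  exact this.injective h

lemma cbrt_cube (x : ℝ) : (cbrt x) ^ 3 = x := by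
  unfold cbrt
  have habs : (|x| ^ ((1:ℝ)/3)) ^ (3:ℕ) = |x| := by
    rw [← Real.rpow_natCast (|x| ^ ((1:ℝ)/3)) 3, ← Real.rpow_mul (abs_nonneg x)]
    norm_num
  rcases lt_trichotomy x 0 with h | h | h
  · rw [Real.sign_of_neg h, mul_pow, habs, abs_of_neg h]; ring
  · simp [h]
  · rw [Real.sign_of_pos h, mul_pow, habs, abs_of_pos h]; ring

lemma cbrt_eq {c x : ℝ} (h : c ^ 3 = x) : cbrt x = c := cube_inj (by rw [cbrt_cube, h])

lemma abs_cbrt (x : ℝ) : |cbrt x| = |x| ^ ((1:ℝ)/3) := by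
  unfold cbrt
  rcases lt_trichotomy x 0 with h | h | h
  · rw [Real.sign_of_neg h, abs_mul, abs_of_nonneg (Real.rpow_nonneg (abs_nonneg x) _)]
    norm_num
  · simp [h]
  · rw [Real.sign_of_pos h, abs_mul, abs_of_nonneg (Real.rpow_nonneg (abs_nonneg x) _)]
    norm_num

lemma cbrt_of_nonneg {x : ℝ} (h : 0 ≤ x) : cbrt x = x ^ ((1:ℝ)/3) := by
  unfold cbrt
  rcases eq_or_lt_of_le h with h0 | h0
  · rw [← h0]; simp [Real.zero_rpow (by norm_num : (1:ℝ)/3 ≠ 0)]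
  · rw [Real.sign_of_pos h0, abs_of_pos h0, one_mul]

noncomputable def phiT (t : ℝ) : ℝ := Real.sqrt (1 - (9/4)*t^2 + (27/16)*t^4)
noncomputable def psiT (t : ℝ) : ℝ := (3 * Real.sqrt 3 / 8) * t^3
noncomputable def xT (t : ℝ) : ℝ := cbrt (phiT t + psiT t) + cbrt (phiT t - psiT t)

lemma phi_arg_nonneg (t : ℝ) : (0:ℝ) ≤ 1 - (9/4)*t^2 + (27/16)*t^4 := by
  nlinarith [sq_nonneg (t^2 - 2/3), sq_nonneg t]

lemma phiT_sq (t : ℝ) : (phiT t)^2 = 1 - (9/4)*t^2 + (27/16)*t^4 :=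
  Real.sq_sqrt (phi_arg_nonneg t)

lemma phiT_ge (t : ℝ) : (1:ℝ)/2 ≤ phiT t := by
  have : Real.sqrt (1/4) ≤ phiT t := by
    apply Real.sqrt_le_sqrt
    nlinarith [sq_nonneg (t^2 - 2/3)]
  rwa [show (1:ℝ)/4 = (1/2)^2 by norm_num, Real.sqrt_sq (by norm_num : (0:ℝ) ≤ 1/2)] at this

lemma phiT_nonneg (t : ℝ) : 0 ≤ phiT t := Real.sqrt_nonneg _

lemma psiT_nonneg {t : ℝ} (ht : 0 ≤ t) : 0 ≤ psiT t := by
  have h3 : (0:ℝ) ≤ Real.sqrt 3 := Real.sqrt_nonneg 3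
  unfold psiT; positivity

lemma psiT_sq {t : ℝ} : (psiT t)^2 = (27/64) * t^6 := by
  unfold psiT
  have : (Real.sqrt 3)^2 = 3 := Real.sq_sqrt (by norm_num)
  nlinarith [this]

lemma phiT_mono {t₁ t₂ : ℝ} (h0 : 0 ≤ t₁) (h12 : t₁ ≤ t₂) (h2 : t₂^2 ≤ 2/3) :
    phiT t₂ ≤ phiT t₁ := by
  apply Real.sqrt_le_sqrt
  have ht12 : t₁^2 ≤ t₂^2 := by nlinarith
  have hsum : (27/16)*(t₁^2+t₂^2) ≤ 9/4 := by nlinarith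
  nlinarith [mul_nonneg (sub_nonneg.2 ht12) (sub_nonneg.2 hsum)]

lemma xT_cubic {t : ℝ} : (xT t)^3 = 3 * (1 - (3/4)*t^2) * xT t + 2 * phiT t := by
  set A := cbrt (phiT t + psiT t) with hA
  set B := cbrt (phiT t - psiT t) with hB
  have hA3 : A^3 = phiT t + psiT t := cbrt_cube _
  have hB3 : B^3 = phiT t - psiT t := cbrt_cube _
  have hAB : A * B = 1 - (3/4)*t^2 := by
    apply cube_inj
    have : (A*B)^3 = (phiT t)^2 - (psiT t)^2 := by rw [mul_pow, hA3, hB3]; ring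
    rw [this, phiT_sq, psiT_sq]; ring
  show (A + B)^3 = 3 * (1 - (3/4)*t^2) * (A + B) + 2 * phiT t
  have : (A+B)^3 = A^3 + B^3 + 3*(A*B)*(A+B) := by ring
  rw [this, hA3, hB3, hAB]; ring

lemma xT_nonneg {t : ℝ} (ht : 0 ≤ t) : 0 ≤ xT t := by
  have h1 : |cbrt (phiT t - psiT t)| ≤ cbrt (phiT t + psiT t) := by
    rw [abs_cbrt]
    rw [cbrt_of_nonneg (add_nonneg (phiT_nonneg t) (psiT_nonneg ht))]
    apply Real.rpow_le_rpow (abs_nonneg _) _ (by norm_num)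
    rw [abs_le]
    constructor
    · nlinarith [phiT_nonneg t, psiT_nonneg ht]
    · nlinarith [psiT_nonneg ht]
  unfold xT
  cases' abs_le.mp h1 with hl hr
  linarith

lemma xT_ge_one {t : ℝ} (ht : 0 ≤ t) (h2 : t^2 ≤ 2/3) : 1 ≤ xT t := by
  have hx0 := xT_nonneg ht
  have hc := xT_cubic (t := t)
  have hP : (0:ℝ) ≤ 1 - (3/4)*t^2 := by linarith
  have hΦ := phiT_ge t
  nlinarith [sq_nonneg (xT t - 1), sq_nonneg (xT t + 1)]

lemma xT_mono {t₁ t₂ : ℝ} (h0 : 0 ≤ t₁) (h12 : t₁ ≤ t₂) (h2 : t₂^2 ≤ 2/3) :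
    xT t₂ ≤ xT t₁ := by
  by_contra hcon
  push_neg at hcon
  have h01 : t₁^2 ≤ 2/3 := by nlinarith
  have hx1 := xT_ge_one h0 h01
  have hx2 := xT_ge_one (le_trans h0 h12) h2
  have hc1 := xT_cubic (t := t₁)
  have hc2 := xT_cubic (t := t₂)
  have hφ := phiT_mono h0 h12 h2
  have hP : (3/4)*t₁^2 ≤ (3/4)*t₂^2 := by nlinarith
  have key1 : 0 < xT t₂^2 + xT t₁ * xT t₂ + xT t₁^2 - 3*(1 - 3/4*t₁^2) := by
    nlinarith [mul_le_mul hx1 hx1 (by norm_num) (by linarith : (0:ℝ) ≤ xT t₁)]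
  have key2 := mul_pos (sub_pos.2 hcon) key1
  have key3 : (0:ℝ) ≤ (3/4*t₂^2 - 3/4*t₁^2) * xT t₂ := mul_nonneg (by linarith) (by linarith)
  nlinarith [key2, key3]








lemma sNorm_sq (k₁ k₂ : ℕ) : (sNorm k₁ k₂)^2 = (k₁:ℝ)^2 + (k₂:ℝ)^2 :=
  Real.sq_sqrt (by positivity)

lemma sNorm_pos {k₁ k₂ : ℕ} (h : 1 ≤ k₁) : 0 < sNorm k₁ k₂ := by
  apply Real.sqrt_pos.2
  have : (1:ℝ) ≤ (k₁:ℝ) := by exact_mod_cast h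
  positivity

lemma sNorm_ge_sqrt2 {k₁ k₂ : ℕ} (h1 : 1 ≤ k₁) (h2 : 1 ≤ k₂) : Real.sqrt 2 ≤ sNorm k₁ k₂ := by
  apply Real.sqrt_le_sqrt
  have hk1 : (1:ℝ) ≤ (k₁:ℝ) := by exact_mod_cast h1
  have hk2 : (1:ℝ) ≤ (k₂:ℝ) := by exact_mod_cast h2
  nlinarith

lemma sNorm_symm (k₁ k₂ : ℕ) : sNorm k₁ k₂ = sNorm k₂ k₁ := by
  unfold sNorm; rw [add_comm]

lemma Phi_eq {k₁ k₂ : ℕ} (β : ℝ) (h : 1 ≤ k₁) : Phi β k₁ k₂ = phiT (β / sNorm k₁ k₂) := by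
  have hs := sNorm_pos (k₂ := k₂) h
  unfold Phi phiT
  congr 1
  field_simp

lemma Psi_eq {k₁ k₂ : ℕ} (β : ℝ) (h : 1 ≤ k₁) : Psi β k₁ k₂ = psiT (β / sNorm k₁ k₂) := by
  have hs := sNorm_pos (k₂ := k₂) h
  unfold Psi psiT
  field_simp

lemma ReOmega_eq {k₁ k₂ : ℕ} (β : ℝ) (h : 1 ≤ k₁) :
    ReOmega β k₁ k₂ = sNorm k₁ k₂ * xT (β / sNorm k₁ k₂) / 2 := by
  unfold ReOmega LamP LamM xT
  rw [Phi_eq β h, Psi_eq β h]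
  ring

lemma ReOmega_symm (β : ℝ) (k₁ k₂ : ℕ) : ReOmega β k₁ k₂ = ReOmega β k₂ k₁ := by
  unfold ReOmega LamP LamM Phi Psi
  rw [sNorm_symm]

lemma gam_eq (β : ℝ) : gam β = (Real.sqrt 2 - 1) * xT (β / Real.sqrt 2) / 2 := by
  have h2 : (Real.sqrt 2)^2 = 2 := Real.sq_sqrt (by norm_num)
  have h2p : (0:ℝ) < Real.sqrt 2 := Real.sqrt_pos.2 (by norm_num)
  have h4 : (Real.sqrt 2)^4 = 4 := by nlinarith [h2]
  have h3c : (Real.sqrt 2)^3 = 2 * Real.sqrt 2 := by nlinarith [h2]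
  have hphi : phiT (β / Real.sqrt 2) = Real.sqrt (1 - (9/8)*β^2 + (27/64)*β^4) := by
    unfold phiT
    congr 1
    rw [div_pow, div_pow, h2, h4]
    ring
  have hpsi : psiT (β / Real.sqrt 2) = (3 * Real.sqrt 3 / (16 * Real.sqrt 2)) * β^3 := by
    unfold psiT
    rw [div_pow, h3c]
    field_simp
    ring
  unfold gam xT
  rw [hphi, hpsi]
  ring

lemma gap_lemma {β s s' : ℝ} (hβ0 : 0 ≤ β) (hβ : β ≤ 2 / Real.sqrt 3)
    (hs' : Real.sqrt 2 ≤ s') (hss : s' ≤ s) :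
    s * xT (β / s) / 2 - s' * xT (β / s') / 2 ≥ (s - s') * xT (β / Real.sqrt 2) / 2 := by
  have h2 : (Real.sqrt 2)^2 = 2 := Real.sq_sqrt (by norm_num)
  have h2p : (0:ℝ) < Real.sqrt 2 := Real.sqrt_pos.2 (by norm_num)
  have h3 : (Real.sqrt 3)^2 = 3 := Real.sq_sqrt (by norm_num)
  have h3p : (0:ℝ) < Real.sqrt 3 := Real.sqrt_pos.2 (by norm_num)
  have hs'p : 0 < s' := lt_of_lt_of_le h2p hs'
  have hsp : 0 < s := lt_of_lt_of_le hs'p hss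
  have hβsq : β^2 ≤ 4/3 := by
    rw [le_div_iff₀ h3p] at hβ
    nlinarith
  have ht0sq : (β / Real.sqrt 2)^2 ≤ 2/3 := by
    rw [div_pow, h2]
    linarith [hβsq]
  have ht' : β / s' ≤ β / Real.sqrt 2 := by gcongr
  have ht : β / s ≤ β / s' := by gcongr
  have htnn : 0 ≤ β / s := by positivity
  have ht'nn : 0 ≤ β / s' := by positivity
  have ht'sq : (β / s')^2 ≤ 2/3 := by
    nlinarith [ht', ht'nn]
  have h1 : xT (β / Real.sqrt 2) ≤ xT (β / s') := xT_mono ht'nn ht' ht0sq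
  have hx2 : xT (β / s') ≤ xT (β / s) := xT_mono htnn ht ht'sq
  have hx0 : 1 ≤ xT (β / Real.sqrt 2) := xT_ge_one (by positivity) ht0sq
  nlinarith [mul_nonneg (le_of_lt hsp) (sub_nonneg.2 hx2),
    mul_nonneg (sub_nonneg.2 hss) (sub_nonneg.2 h1)]

lemma sgap {s s' K K' : ℝ} (hK' : 1 ≤ K') (hd : K' ≤ K) (hs'p : 0 < s') (hss : s' ≤ s)
    (hsle : s ≤ Real.sqrt 2 * K) (hs'le : s' ≤ K + K') (hprod : s^2 - s'^2 = K^2 - K'^2) :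
    s - s' ≥ (Real.sqrt 2 - 1) * (K - K') := by
  have h2s : (Real.sqrt 2)^2 = 2 := Real.sq_sqrt (by norm_num)
  have h2p : (0:ℝ) < Real.sqrt 2 := Real.sqrt_pos.2 (by norm_num)
  have h1s : (1:ℝ) ≤ Real.sqrt 2 := by nlinarith
  have hkey : (Real.sqrt 2 - 1) * (s + s') ≤ K + K' := by
    nlinarith [mul_le_mul_of_nonneg_left (add_le_add hsle hs'le) (sub_nonneg.2 h1s)]
  have hSpos : 0 < s + s' := by linarith
  have hdK : (0:ℝ) ≤ K - K' := by linarith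
  have hmul : ((Real.sqrt 2 - 1) * (K - K')) * (s + s') ≤ (s - s') * (s + s') := by
    have hL : (s - s') * (s + s') = (K - K') * (K + K') := by nlinarith
    rw [hL]
    calc ((Real.sqrt 2 - 1) * (K - K')) * (s + s')
        = (K - K') * ((Real.sqrt 2 - 1) * (s + s')) := by ring
      _ ≤ (K - K') * (K + K') := mul_le_mul_of_nonneg_left hkey hdK
  exact le_of_mul_le_mul_right hmul hSpos

lemma key_ineq (β : ℝ) (hβ0 : 0 ≤ β) (hβ : β ≤ 2 / Real.sqrt 3)
    (k₁ k₂ k₂' : ℕ) (h1 : 1 ≤ k₁) (h2' : 1 ≤ k₂') (hle : k₂' ≤ k₂) (hmax : k₁ ≤ k₂) :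
    ReOmega β k₁ k₂ - ReOmega β k₁ k₂' ≥ gam β * ((k₂:ℝ) - (k₂':ℝ)) := by
  have h2 : 1 ≤ k₂ := le_trans h2' hle
  have hsq : (sNorm k₁ k₂)^2 = (k₁:ℝ)^2 + (k₂:ℝ)^2 := sNorm_sq k₁ k₂
  have hsq' : (sNorm k₁ k₂')^2 = (k₁:ℝ)^2 + (k₂':ℝ)^2 := sNorm_sq k₁ k₂'
  have hsqrt2 : Real.sqrt 2 ≤ sNorm k₁ k₂' := sNorm_ge_sqrt2 h1 h2'
  have h2p : (0:ℝ) < Real.sqrt 2 := Real.sqrt_pos.2 (by norm_num)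
  have hk : (k₂':ℝ) ≤ (k₂:ℝ) := by exact_mod_cast hle
  have hk1 : (k₁:ℝ) ≤ (k₂:ℝ) := by exact_mod_cast hmax
  have hk2' : (1:ℝ) ≤ (k₂':ℝ) := by exact_mod_cast h2'
  have hs'p : 0 < sNorm k₁ k₂' := lt_of_lt_of_le h2p hsqrt2
  have hss : sNorm k₁ k₂' ≤ sNorm k₁ k₂ := by
    apply Real.sqrt_le_sqrt
    nlinarith
  have hsle : sNorm k₁ k₂ ≤ Real.sqrt 2 * (k₂:ℝ) := by
    have h : sNorm k₁ k₂ ≤ Real.sqrt (2 * (k₂:ℝ)^2) := Real.sqrt_le_sqrt (by nlinarith)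
    rwa [Real.sqrt_mul (by norm_num : (0:ℝ) ≤ 2), Real.sqrt_sq (by positivity : (0:ℝ) ≤ (k₂:ℝ))] at h
  have hs'le : sNorm k₁ k₂' ≤ (k₂:ℝ) + (k₂':ℝ) := by
    have h : sNorm k₁ k₂' ≤ Real.sqrt (((k₂:ℝ) + (k₂':ℝ))^2) := Real.sqrt_le_sqrt (by nlinarith)
    rwa [Real.sqrt_sq (by positivity)] at h
  have hgap : sNorm k₁ k₂ - sNorm k₁ k₂' ≥ (Real.sqrt 2 - 1) * ((k₂:ℝ) - (k₂':ℝ)) :=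
    sgap hk2' hk hs'p hss hsle hs'le (by rw [hsq, hsq']; ring)
  rw [ReOmega_eq β h1, ReOmega_eq β h1, gam_eq]
  have hgl := gap_lemma hβ0 hβ hsqrt2 hss
  have h3 : (Real.sqrt 3)^2 = 3 := Real.sq_sqrt (by norm_num)
  have h3p : (0:ℝ) < Real.sqrt 3 := Real.sqrt_pos.2 (by norm_num)
  have h2s : (Real.sqrt 2)^2 = 2 := Real.sq_sqrt (by norm_num)
  have hx0 : 1 ≤ xT (β / Real.sqrt 2) := by
    apply xT_ge_one (by positivity)
    rw [div_pow, h2s]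
    rw [le_div_iff₀ h3p] at hβ
    nlinarith
  have hstep := mul_le_mul_of_nonneg_right hgap (by linarith : (0:ℝ) ≤ xT (β / Real.sqrt 2))
  calc sNorm k₁ k₂ * xT (β / sNorm k₁ k₂) / 2 - sNorm k₁ k₂' * xT (β / sNorm k₁ k₂') / 2
      ≥ (sNorm k₁ k₂ - sNorm k₁ k₂') * xT (β / Real.sqrt 2) / 2 := hgl
    _ ≥ ((Real.sqrt 2 - 1) * ((k₂:ℝ) - (k₂':ℝ))) * xT (β / Real.sqrt 2) / 2 := by linarith
    _ = (Real.sqrt 2 - 1) * xT (β / Real.sqrt 2) / 2 * ((k₂:ℝ) - (k₂':ℝ)) := by ring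

/-- gap estimates for `Re ω_{k₁k₂}` when `β ∈ [0, 2/√3]`. -/
theorem stmt_1 (β : ℝ) (hβ0 : 0 ≤ β) (hβ : β ≤ 2 / Real.sqrt 3) :
    (∀ k₁ k₂ k₂' : ℕ, 1 ≤ k₁ → 1 ≤ k₂ → 1 ≤ k₂' → k₁ ≤ max k₂ k₂' →
      |ReOmega β k₁ k₂ - ReOmega β k₁ k₂'| ≥ gam β * |(k₂ : ℝ) - (k₂' : ℝ)|) ∧
    (∀ k₂ k₁ k₁' : ℕ, 1 ≤ k₂ → 1 ≤ k₁ → 1 ≤ k₁' → k₂ ≤ max k₁ k₁' →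
      |ReOmega β k₁ k₂ - ReOmega β k₁' k₂| ≥ gam β * |(k₁ : ℝ) - (k₁' : ℝ)|) := by
  have H : ∀ k₁ k₂ k₂' : ℕ, 1 ≤ k₁ → 1 ≤ k₂ → 1 ≤ k₂' → k₁ ≤ max k₂ k₂' →
      |ReOmega β k₁ k₂ - ReOmega β k₁ k₂'| ≥ gam β * |(k₂ : ℝ) - (k₂' : ℝ)| := by
    intro k₁ k₂ k₂' h1 h2 h2' hmax
    rcases le_total k₂' k₂ with hle | hle
    · have hmax' : k₁ ≤ k₂ := by omega
      have hk := key_ineq β hβ0 hβ k₁ k₂ k₂' h1 h2' hle hmax'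
      have habs : |(k₂:ℝ) - (k₂':ℝ)| = (k₂:ℝ) - (k₂':ℝ) :=
        abs_of_nonneg (sub_nonneg.2 (by exact_mod_cast hle))
      rw [habs]
      exact le_trans hk (le_abs_self _)
    · have hmax' : k₁ ≤ k₂' := by omega
      have hk := key_ineq β hβ0 hβ k₁ k₂' k₂ h1 h2 hle hmax'
      have habs : |(k₂:ℝ) - (k₂':ℝ)| = (k₂':ℝ) - (k₂:ℝ) := by
        rw [abs_sub_comm]
        exact abs_of_nonneg (sub_nonneg.2 (by exact_mod_cast hle))
      rw [habs, abs_sub_comm]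
      exact le_trans hk (le_abs_self _)
  refine ⟨H, fun k₂ k₁ k₁' h2 h1 h1' hmax => ?_⟩
  rw [ReOmega_symm β k₁ k₂, ReOmega_symm β k₁' k₂]
  exact H k₂ k₁ k₁' h2 h1 h1' hmax
end

section
/- Let T > 0, γ > 2π/T, τ ≥ 1 an integer, and (ω_n)_{n≥1} a sequence of complex numbers such that |Re ω_n − Re ω_m| ≥ γ|n−m| whenever max{n,m} ≥ τ, and Re ω_n ≥ γn for all n ≥ 1. Then for every n ≥ τ one has Σ_{m≥1, m≠n} |K(ω_n − conj(ω_m))| + Σ_{m≥1} |K(ω_n + ω_m)| ≤ 4π/(Tγ²). -/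
open Real

/-- `K(u) = Tπ/(π² − T²u²)`. -/
noncomputable def Kfun (T : ℝ) (u : ℂ) : ℂ :=
  ((T : ℂ) * (π : ℂ)) / ((π : ℂ) ^ 2 - (T : ℂ) ^ 2 * u ^ 2)

open Filter Topology in
private lemma uu_hasSum (a : ℕ) :
    HasSum (fun j : ℕ => 1/((a:ℝ)+(j:ℝ)+1/2) - 1/((a:ℝ)+(j:ℝ)+3/2)) (1/((a:ℝ)+1/2)) := by
  set f : ℕ → ℝ := fun j => 1/((a:ℝ)+(j:ℝ)+1/2) with hf
  have hpos : ∀ j : ℕ, 0 < (a:ℝ)+(j:ℝ)+1/2 := by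
    intro j; positivity
  have hnn : ∀ j : ℕ, 0 ≤ f j - f (j+1) := by
    intro j
    have h2 : f (j+1) ≤ f j := by
      apply one_div_le_one_div_of_le (hpos j)
      push_cast; linarith
    linarith
  have heq : (fun j : ℕ => 1/((a:ℝ)+(j:ℝ)+1/2) - 1/((a:ℝ)+(j:ℝ)+3/2))
      = fun j => f j - f (j+1) := by
    funext j; simp only [hf]; push_cast; ring_nf
  rw [heq, hasSum_iff_tendsto_nat_of_nonneg hnn]
  simp only [Finset.sum_range_sub' f]
  have hft : Tendsto f atTop (𝓝 0) := by
    have h1 : Tendsto (fun j : ℕ => (j:ℝ) + ((a:ℝ)+1/2)) atTop atTop :=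
      tendsto_atTop_add_const_right _ _ tendsto_natCast_atTop_atTop
    have h2 := h1.inv_tendsto_atTop
    convert h2 using 1
    funext j; simp only [hf, Pi.inv_apply, one_div]; ring_nf
  have h3 : Tendsto (fun N : ℕ => f 0 - f N) atTop (𝓝 (f 0 - 0)) :=
    tendsto_const_nhds.sub hft
  simpa [hf] using h3

private lemma Kbound (T γ : ℝ) (hT : 0 < T) (hγT : 2*π < T*γ) (u : ℂ) (k : ℕ)
    (h : γ*((k:ℝ)+1) ≤ |u.re|) :
    ‖Kfun T u‖ ≤ π/(T*γ^2) * (1/((k:ℝ)+1/2) - 1/((k:ℝ)+3/2)) := by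
  have hπ := Real.pi_pos
  have hγ : 0 < γ := by nlinarith
  have hk : (0:ℝ) ≤ (k:ℝ) := k.cast_nonneg
  set X : ℝ := ((k:ℝ)+1)^2 - 1/4 with hX
  have hXpos : 0 < X := by rw [hX]; nlinarith
  have habs2 : ‖(T:ℂ)^2 * u^2‖ = T^2 * ‖u‖ ^ 2 := by
    rw [norm_mul, norm_pow, norm_pow, Complex.norm_real, Real.norm_eq_abs, abs_of_pos hT]
  have habsπ : ‖(π:ℂ)^2‖ = π^2 := by
    rw [norm_pow, Complex.norm_real, Real.norm_eq_abs, abs_of_pos hπ]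
  have hre : γ*((k:ℝ)+1) ≤ ‖u‖ :=
    le_trans h (Complex.abs_re_le_norm u)
  have hD : T^2*γ^2*X ≤ ‖(π:ℂ)^2 - (T:ℂ)^2*u^2‖ := by
    have h1 := norm_sub_norm_le ((T:ℂ)^2*u^2) ((π:ℂ)^2)
    have h2 : ‖(T:ℂ)^2*u^2 - (π:ℂ)^2‖
        = ‖(π:ℂ)^2 - (T:ℂ)^2*u^2‖ := norm_sub_rev _ _
    rw [h2, habs2, habsπ] at h1
    have h3 : γ^2*((k:ℝ)+1)^2 ≤ ‖u‖ ^ 2 := by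
      have hnn : 0 ≤ γ*((k:ℝ)+1) := by positivity
      nlinarith [mul_le_mul hre hre hnn (norm_nonneg u)]
    have hπ2 : π^2 ≤ T^2*γ^2/4 := by nlinarith
    have h4 : T^2*(γ^2*((k:ℝ)+1)^2) ≤ T^2*(‖u‖ ^ 2) :=
      mul_le_mul_of_nonneg_left h3 (sq_nonneg T)
    rw [hX]
    nlinarith [h1, h4, hπ2]
  have hKabs : ‖Kfun T u‖
      = (T*π) / ‖(π:ℂ)^2 - (T:ℂ)^2*u^2‖ := by
    rw [Kfun, norm_div, norm_mul, Complex.norm_real, Complex.norm_real,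
      Real.norm_eq_abs, Real.norm_eq_abs, abs_of_pos hT, abs_of_pos hπ]
  rw [hKabs]
  have hTπ : (0:ℝ) ≤ T*π := by positivity
  have hdenpos : 0 < T^2*γ^2*X := by positivity
  calc (T*π) / ‖(π:ℂ)^2 - (T:ℂ)^2*u^2‖
      ≤ (T*π) / (T^2*γ^2*X) := by gcongr
    _ = π/(T*γ^2) * (1/((k:ℝ)+1/2) - 1/((k:ℝ)+3/2)) := by
        have h1 : ((k:ℝ)+1/2) ≠ 0 := by positivity
        have h2 : ((k:ℝ)+3/2) ≠ 0 := by positivity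
        have hXmul : X = ((k:ℝ)+1/2)*((k:ℝ)+3/2) := by rw [hX]; ring
        have hfr : 1/((k:ℝ)+1/2) - 1/((k:ℝ)+3/2) = 1/X := by
          rw [hXmul]
          field_simp
          ring
        rw [hfr]
        have hX0 : X ≠ 0 := ne_of_gt hXpos
        have hT0 : T ≠ 0 := ne_of_gt hT
        have hγ0 : γ ≠ 0 := ne_of_gt hγ
        field_simp

/-- under the gap and growth hypotheses on `(ω_n)`, for every `n ≥ τ`,
`Σ_{m≥1, m≠n} |K(ω_n − conj ω_m)| + Σ_{m≥1} |K(ω_n + ω_m)| ≤ 4π/(Tγ²)`. -/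
theorem stmt_11 (T γ : ℝ) (τ : ℕ) (hT : 0 < T) (hγ : 2 * π / T < γ) (hτ : 1 ≤ τ)
    (ω : ℕ → ℂ)
    (hgap : ∀ n m : ℕ, 1 ≤ n → 1 ≤ m → τ ≤ max n m →
      γ * |(n : ℝ) - (m : ℝ)| ≤ |(ω n).re - (ω m).re|)
    (hlow : ∀ n : ℕ, 1 ≤ n → γ * (n : ℝ) ≤ (ω n).re) :
    ∀ n : ℕ, τ ≤ n →
      (∑' m : {m : ℕ // 1 ≤ m ∧ m ≠ n},
          ‖Kfun T (ω n - (starRingEnd ℂ) (ω (m : ℕ)))‖)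
        + (∑' m : {m : ℕ // 1 ≤ m}, ‖Kfun T (ω n + ω (m : ℕ))‖)
      ≤ 4 * π / (T * γ ^ 2) := by
  intro n hn
  have hπ := Real.pi_pos
  have hγT : 2*π < T*γ := by
    have := (div_lt_iff₀ hT).mp hγ
    linarith
  have hγpos : 0 < γ := by nlinarith
  have hn1 : 1 ≤ n := le_trans hτ hn
  set C : ℝ := π/(T*γ^2) with hC
  have hCpos : 0 < C := by positivity
  -- the telescoping one-step function
  set t : ℕ → ℝ := fun k => 1/((k:ℝ)+1/2) - 1/((k:ℝ)+3/2) with ht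
  have htnn : ∀ k, 0 ≤ t k := by
    intro k
    have h1 : (0:ℝ) < (k:ℝ)+1/2 := by positivity
    have h2 : t k = 1/((k:ℝ)+1/2) - 1/((k:ℝ)+3/2) := rfl
    have h3 : 1/((k:ℝ)+3/2) ≤ 1/((k:ℝ)+1/2) :=
      one_div_le_one_div_of_le h1 (by linarith)
    rw [h2]; linarith
  -- bound functions
  set gl : ℕ → ℝ := fun k => if k + 2 ≤ n then C * t k else 0 with hgl
  set g : ℕ → ℝ := fun m => if m % 2 = 0 then gl (m/2) else C * t (m/2) with hg
  have hgnn : ∀ m, 0 ≤ g m := by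
    intro m
    rw [hg]
    dsimp only
    split_ifs with h1
    · rw [hgl]; dsimp only; split_ifs
      · exact mul_nonneg hCpos.le (htnn _)
      · exact le_refl 0
    · exact mul_nonneg hCpos.le (htnn _)
  -- HasSum for the even part (finite support)
  have hgl_hasSum : HasSum gl (C * (2 - 1/(((n-1:ℕ):ℝ)+1/2))) := by
    have h0 : ∀ k ∉ Finset.range (n-1), gl k = 0 := by
      intro k hk
      simp only [Finset.mem_range] at hk
      rw [hgl]
      dsimp only
      rw [if_neg (by omega)]
    have h1 := hasSum_sum_of_ne_finset_zero (s := Finset.range (n-1)) (f := gl) (L := SummationFilter.unconditional ℕ) h0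
    have h2 : ∑ k ∈ Finset.range (n-1), gl k = C * (2 - 1/(((n-1:ℕ):ℝ)+1/2)) := by
      have h3 : ∀ k ∈ Finset.range (n-1), gl k
          = C * ((fun j : ℕ => 1/((j:ℝ)+1/2)) k - (fun j : ℕ => 1/((j:ℝ)+1/2)) (k+1)) := by
        intro k hk
        simp only [Finset.mem_range] at hk
        rw [hgl]
        dsimp only
        rw [if_pos (by omega), ht]
        push_cast
        ring_nf
      rw [Finset.sum_congr rfl h3, ← Finset.mul_sum, Finset.sum_range_sub']
      norm_num
    rwa [h2] at h1
  -- HasSum for the odd part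
  have hodd_hasSum : HasSum (fun k : ℕ => C * t k) (C * 2) := by
    have h1 := (uu_hasSum 0).mul_left C
    have h2 : (fun j : ℕ => C * (1/(((0:ℕ):ℝ)+(j:ℝ)+1/2) - 1/(((0:ℕ):ℝ)+(j:ℝ)+3/2)))
        = fun k => C * t k := by
      funext j; rw [ht]; norm_num
    have h3 : C * (1/(((0:ℕ):ℝ)+1/2)) = C * 2 := by norm_num
    rw [h2, h3] at h1
    exact h1
  have hg_hasSum : HasSum g ((C * (2 - 1/(((n-1:ℕ):ℝ)+1/2))) + C * 2) := by
    apply HasSum.even_add_odd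
    · have : (fun k : ℕ => g (2*k)) = gl := by
        funext k
        rw [hg]
        dsimp only
        rw [if_pos (by omega)]
        have h2 : 2*k/2 = k := by omega
        rw [h2]
      rw [this]; exact hgl_hasSum
    · have : (fun k : ℕ => g (2*k+1)) = fun k => C * t k := by
        funext k
        rw [hg]
        dsimp only
        rw [if_neg (by omega)]
        have h2 : (2*k+1)/2 = k := by omega
        rw [h2]
      rw [this]; exact hodd_hasSum
  -- injection for the first sum
  set e : {m : ℕ // 1 ≤ m ∧ m ≠ n} → ℕ :=
    fun m => if (m:ℕ) < n then 2*(n - (m:ℕ) - 1) else 2*((m:ℕ) - n - 1) + 1 with he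
  have he_inj : Function.Injective e := by
    rintro ⟨m₁, h₁, h₁'⟩ ⟨m₂, h₂, h₂'⟩ hmeq
    rw [he] at hmeq
    simp only at hmeq
    apply Subtype.ext
    simp only
    split_ifs at hmeq <;> omega
  -- pointwise bound for the first sum
  have hbound1 : ∀ m : {m : ℕ // 1 ≤ m ∧ m ≠ n},
      ‖Kfun T (ω n - (starRingEnd ℂ) (ω (m : ℕ)))‖ ≤ g (e m) := by
    rintro ⟨m, hm1, hmn⟩
    have hre : (ω n - (starRingEnd ℂ) (ω m)).re = (ω n).re - (ω m).re := by
      simp [Complex.sub_re, Complex.conj_re]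
    have hgapnm : γ * |(n : ℝ) - (m : ℝ)| ≤ |(ω n).re - (ω m).re| :=
      hgap n m hn1 hm1 (le_trans hn (le_max_left _ _))
    rcases lt_or_gt_of_ne (fun hc => hmn (by exact_mod_cast hc)) with hlt | hgt
    · -- m < n case : e = 2*(n-m-1) even
      have hklt : (m:ℕ) < n := hlt
      have heval : e ⟨m, hm1, hmn⟩ = 2*(n - m - 1) := by
        rw [he]; simp only; rw [if_pos hklt]
      rw [heval]
      have hgval : g (2*(n-m-1)) = C * t (n-m-1) := by
        rw [hg]
        dsimp only
        rw [if_pos (by omega)]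
        have : 2*(n-m-1)/2 = n-m-1 := by omega
        rw [this, hgl]
        dsimp only
        rw [if_pos (by omega)]
      rw [hgval, ht]
      apply Kbound T γ hT hγT _ (n-m-1)
      rw [hre]
      have hcast : ((n-m-1:ℕ):ℝ) + 1 = (n:ℝ) - (m:ℝ) := by
        rw [Nat.cast_sub (by omega : 1 ≤ n - m), Nat.cast_sub (by omega : m ≤ n)]
        push_cast
        ring
      rw [hcast]
      have habs : |(n:ℝ) - (m:ℝ)| = (n:ℝ) - (m:ℝ) := by
        apply abs_of_pos
        have : (m:ℝ) < (n:ℝ) := by exact_mod_cast hklt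
        linarith
      rw [habs] at hgapnm
      exact hgapnm
    · -- m > n case : e = 2*(m-n-1)+1 odd
      have hkgt : n < (m:ℕ) := hgt
      have heval : e ⟨m, hm1, hmn⟩ = 2*(m - n - 1) + 1 := by
        rw [he]; simp only; rw [if_neg (by omega)]
      rw [heval]
      have hgval : g (2*(m-n-1)+1) = C * t (m-n-1) := by
        rw [hg]
        dsimp only
        rw [if_neg (by omega)]
        have : (2*(m-n-1)+1)/2 = m-n-1 := by omega
        rw [this]
      rw [hgval, ht]
      apply Kbound T γ hT hγT _ (m-n-1)
      rw [hre]
      have hcast : ((m-n-1:ℕ):ℝ) + 1 = (m:ℝ) - (n:ℝ) := by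
        rw [Nat.cast_sub (by omega : 1 ≤ m - n), Nat.cast_sub (by omega : n ≤ m)]
        push_cast
        ring
      rw [hcast]
      have habs : |(n:ℝ) - (m:ℝ)| = (m:ℝ) - (n:ℝ) := by
        rw [abs_sub_comm]
        apply abs_of_pos
        have : (n:ℝ) < (m:ℝ) := by exact_mod_cast hkgt
        linarith
      rw [habs] at hgapnm
      exact hgapnm
  -- summability of the first sum
  have hf1_summ : Summable (fun m : {m : ℕ // 1 ≤ m ∧ m ≠ n} =>
      ‖Kfun T (ω n - (starRingEnd ℂ) (ω (m : ℕ)))‖) := by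
    apply Summable.of_nonneg_of_le (fun m => norm_nonneg _) hbound1
    exact hg_hasSum.summable.comp_injective he_inj
  have hsum1 : (∑' m : {m : ℕ // 1 ≤ m ∧ m ≠ n},
      ‖Kfun T (ω n - (starRingEnd ℂ) (ω (m : ℕ)))‖)
      ≤ (C * (2 - 1/(((n-1:ℕ):ℝ)+1/2))) + C * 2 :=
    hasSum_le_inj e he_inj (fun c _ => hgnn c) hbound1 hf1_summ.hasSum hg_hasSum
  -- second sum
  set g2 : ℕ → ℝ := fun j => C * (1/((n:ℝ)+(j:ℝ)+1/2) - 1/((n:ℝ)+(j:ℝ)+3/2)) with hg2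
  have hg2nn : ∀ j, 0 ≤ g2 j := by
    intro j
    rw [hg2]
    dsimp only
    apply mul_nonneg hCpos.le
    have h1 : (0:ℝ) < (n:ℝ)+(j:ℝ)+1/2 := by positivity
    have h3 : 1/((n:ℝ)+(j:ℝ)+3/2) ≤ 1/((n:ℝ)+(j:ℝ)+1/2) :=
      one_div_le_one_div_of_le h1 (by linarith)
    linarith
  have hg2_hasSum : HasSum g2 (C * (1/((n:ℝ)+1/2))) := (uu_hasSum n).mul_left C
  set e2 : {m : ℕ // 1 ≤ m} → ℕ := fun m => (m:ℕ) - 1 with he2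
  have he2_inj : Function.Injective e2 := by
    rintro ⟨m₁, h₁⟩ ⟨m₂, h₂⟩ hmeq
    rw [he2] at hmeq
    simp only at hmeq
    apply Subtype.ext
    simp only
    omega
  have hbound2 : ∀ m : {m : ℕ // 1 ≤ m},
      ‖Kfun T (ω n + ω (m : ℕ))‖ ≤ g2 (e2 m) := by
    rintro ⟨m, hm1⟩
    have heval : e2 ⟨m, hm1⟩ = m - 1 := rfl
    rw [heval, hg2]
    dsimp only
    have hcast1 : (n:ℝ) + ((m-1:ℕ):ℝ) + 1/2 = ((n+(m-1):ℕ):ℝ) + 1/2 := by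
      rw [Nat.cast_add]
    have hcast2 : (n:ℝ) + ((m-1:ℕ):ℝ) + 3/2 = ((n+(m-1):ℕ):ℝ) + 3/2 := by
      rw [Nat.cast_add]
    rw [hcast1, hcast2]
    apply Kbound T γ hT hγT _ (n+(m-1))
    have hcast3 : ((n+(m-1):ℕ):ℝ) + 1 = (n:ℝ) + (m:ℝ) := by
      rw [Nat.cast_add, Nat.cast_sub (by omega : 1 ≤ m)]
      push_cast
      ring
    rw [hcast3]
    have hre : (ω n + ω m).re = (ω n).re + (ω m).re := Complex.add_re _ _
    have h1 := hlow n hn1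
    have h2 := hlow m hm1
    rw [hre]
    have h3 : γ * ((n:ℝ) + (m:ℝ)) ≤ (ω n).re + (ω m).re := by
      have := mul_add γ (n:ℝ) (m:ℝ)
      linarith
    exact le_trans h3 (le_abs_self _)
  have hf2_summ : Summable (fun m : {m : ℕ // 1 ≤ m} =>
      ‖Kfun T (ω n + ω (m : ℕ))‖) := by
    apply Summable.of_nonneg_of_le (fun m => norm_nonneg _) hbound2
    exact hg2_hasSum.summable.comp_injective he2_inj
  have hsum2 : (∑' m : {m : ℕ // 1 ≤ m}, ‖Kfun T (ω n + ω (m : ℕ))‖)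
      ≤ C * (1/((n:ℝ)+1/2)) :=
    hasSum_le_inj e2 he2_inj (fun c _ => hg2nn c) hbound2 hf2_summ.hasSum hg2_hasSum
  -- combine
  have hfinal : (C * (2 - 1/(((n-1:ℕ):ℝ)+1/2))) + C * 2 + C * (1/((n:ℝ)+1/2))
      ≤ 4 * π / (T * γ ^ 2) := by
    have hcast : ((n-1:ℕ):ℝ) = (n:ℝ) - 1 := by
      rw [Nat.cast_sub hn1]; norm_num
    rw [hcast]
    have hn1R : (1:ℝ) ≤ (n:ℝ) := by exact_mod_cast hn1
    have hd1 : (0:ℝ) < (n:ℝ) - 1 + 1/2 := by linarith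
    have hmono : 1/((n:ℝ)+1/2) ≤ 1/((n:ℝ)-1+1/2) :=
      one_div_le_one_div_of_le hd1 (by linarith)
    have h4C : 4 * π / (T * γ ^ 2) = 4 * C := by
      rw [hC]; ring
    rw [h4C]
    nlinarith [hCpos]
  calc (∑' m : {m : ℕ // 1 ≤ m ∧ m ≠ n},
          ‖Kfun T (ω n - (starRingEnd ℂ) (ω (m : ℕ)))‖)
        + (∑' m : {m : ℕ // 1 ≤ m}, ‖Kfun T (ω n + ω (m : ℕ))‖)
      ≤ ((C * (2 - 1/(((n-1:ℕ):ℝ)+1/2))) + C * 2) + C * (1/((n:ℝ)+1/2)) :=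
        add_le_add hsum1 hsum2
    _ ≤ 4 * π / (T * γ ^ 2) := hfinal
end
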